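/- arXiv:1408.1336 — 2 statements merged into one kernel-verified Lean document; each statement's English description precedes it below -/
import Mathlib

section
/- (General C-bound) In the general structured output setting with margin M_ρ(x,y) = ⟨E_{h∼ρ}h(x), Y(y)⟩ − max_{c≠y}⟨E_{h∼ρ}h(x), Y(c)⟩, if E_{(x,y)∼D}[M_ρ(x,y)] > 0 then R_D(B_ρ) ≤ 1 − (E_{(x,y)∼D}[M_ρ(x,y)])² / E_{(x,y)∼D}[(M_ρ(x,y))²]. -/
/-!
A misclassified pair has margin `M ≤ 0`: if `Y(c)` is at least as close to `g x` as `Y(y)`,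
then, the `Y(c)` being unit vectors, `⟪g x, Y(y)⟫ ≤ ⟪g x, Y(c)⟫`. It remains to bound
`P(M ≤ 0)` by the one-sided Chebyshev (Cantelli) argument: with `λ = E M / E M²`, the square
`(1 - λ M)²` is at least `1` wherever `M ≤ 0`, and its expectation is `1 - (E M)² / E M²`.
-/

open MeasureTheory RealInnerProductSpace

section Cantelli

variable {α : Type*} [MeasurableSpace α] {ν : Measure α} [IsProbabilityMeasure ν]

lemma integral_one_sub_mul_sq {f : α → ℝ} (hf : MemLp f 2 ν) (t : ℝ) :
    ∫ x, (1 - t * f x) ^ 2 ∂ν = 1 - 2 * t * ∫ x, f x ∂ν + t ^ 2 * ∫ x, f x ^ 2 ∂ν := by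
  have hf1 : Integrable f ν := hf.integrable one_le_two
  have hf2 : Integrable (fun x => f x ^ 2) ν := hf.integrable_sq
  calc ∫ x, (1 - t * f x) ^ 2 ∂ν = ∫ x, (1 - (2 * t) * f x + t ^ 2 * f x ^ 2) ∂ν := by
        congr with x; ring
    _ = _ := by
        have hlin : Integrable (fun x => 1 - 2 * t * f x) ν :=
          (integrable_const 1).sub (hf1.const_mul _)
        rw [integral_add hlin (hf2.const_mul _), integral_sub (integrable_const 1)
          (hf1.const_mul _), integral_const_mul, integral_const_mul, integral_const,
          probReal_univ, one_smul]

theorem measureReal_nonpos_le_one_sub_sq_integral_div {f : α → ℝ} (hf : MemLp f 2 ν)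
    (hmean : 0 ≤ ∫ x, f x ∂ν) :
    ν.real {x | f x ≤ 0} ≤ 1 - (∫ x, f x ∂ν) ^ 2 / ∫ x, f x ^ 2 ∂ν := by
  set a := ∫ x, f x ∂ν
  set b := ∫ x, f x ^ 2 ∂ν
  set t := a / b
  have ht : 0 ≤ t := div_nonneg hmean (integral_nonneg fun x => sq_nonneg (f x))
  have hsub : {x | f x ≤ 0} ⊆ {x | 1 ≤ (1 - t * f x) ^ 2} := fun x (hx : f x ≤ 0) =>
    show 1 ≤ (1 - t * f x) ^ 2 from
      one_le_pow₀ (by linarith [mul_nonpos_of_nonneg_of_nonpos ht hx])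
  have hmarkov := mul_meas_ge_le_integral_of_nonneg
    (Filter.Eventually.of_forall fun x => sq_nonneg (1 - t * f x))
    (((memLp_const 1).sub (hf.const_mul t)).integrable_sq) 1
  -- `t = a / b` minimises the quadratic; for `b = 0` both sides are `1` by `x / 0 = 0`.
  have hopt : 1 - 2 * t * a + t ^ 2 * b = 1 - a ^ 2 / b := by
    rcases eq_or_ne b 0 with hb | hb
    · simp [t, hb]
    · simp only [t]; field_simp; ring
  calc ν.real {x | f x ≤ 0} ≤ ν.real {x | 1 ≤ (1 - t * f x) ^ 2} := measureReal_mono hsub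
    _ ≤ ∫ x, (1 - t * f x) ^ 2 ∂ν := by simpa using hmarkov
    _ = 1 - a ^ 2 / b := by rw [integral_one_sub_mul_sq hf, hopt]

end Cantelli

section Margin

variable {E Y : Type*} [NormedAddCommGroup E] [InnerProductSpace ℝ E]

lemma norm_sub_sq_le_norm_sub_sq_iff_inner_le {u w : E} (h : ‖u‖ = ‖w‖) (v : E) :
    ‖w - v‖ ^ 2 ≤ ‖u - v‖ ^ 2 ↔ ⟪v, u⟫ ≤ ⟪v, w⟫ := by
  rw [norm_sub_sq_real, norm_sub_sq_real, h, real_inner_comm u, real_inner_comm w]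
  constructor <;> intro <;> linarith

noncomputable def margin (emb : Y → E) (v : E) (y : Y) : ℝ :=
  ⟪v, emb y⟫ - ⨆ c : {c : Y // c ≠ y}, ⟪v, emb c.1⟫

lemma margin_nonpos_of_norm_sub_sq_le [Finite Y] {emb : Y → E} {v : E} {y c : Y}
    (hnorm : ‖emb y‖ = ‖emb c‖) (hc : c ≠ y) (hle : ‖emb c - v‖ ^ 2 ≤ ‖emb y - v‖ ^ 2) :
    margin emb v y ≤ 0 := by
  have hinner : ⟪v, emb y⟫ ≤ ⟪v, emb c⟫ :=
    (norm_sub_sq_le_norm_sub_sq_iff_inner_le hnorm v).1 hle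
  have hsup : ⟪v, emb c⟫ ≤ ⨆ c : {c : Y // c ≠ y}, ⟪v, emb c.1⟫ :=
    le_ciSup (f := fun c : {c : Y // c ≠ y} => ⟪v, emb c.1⟫) (Set.finite_range _).bddAbove
      ⟨c, hc⟩
  exact sub_nonpos.2 (hinner.trans hsup)

end Margin

theorem general_c_bound_general {X E Y : Type*} [MeasurableSpace X]
    [NormedAddCommGroup E] [InnerProductSpace ℝ E]
    [Fintype Y] [MeasurableSpace Y]
    (emb : Y → E) (hnorm : ∀ c : Y, ‖emb c‖ = 1)
    (g : X → E)
    (D : Measure (X × Y)) [IsProbabilityMeasure D]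
    (hM : MemLp (fun p : X × Y =>
        ⟪g p.1, emb p.2⟫ - (⨆ c : {c : Y // c ≠ p.2}, ⟪g p.1, emb c.1⟫)) 2 D)
    (hpos : 0 < ∫ p : X × Y,
        (⟪g p.1, emb p.2⟫ - (⨆ c : {c : Y // c ≠ p.2}, ⟪g p.1, emb c.1⟫)) ∂D) :
    (D {p : X × Y |
        ¬ ∀ c : Y, c ≠ p.2 → ‖emb p.2 - g p.1‖ ^ 2 < ‖emb c - g p.1‖ ^ 2}).toReal ≤
      1 - (∫ p : X × Y,
            (⟪g p.1, emb p.2⟫ - (⨆ c : {c : Y // c ≠ p.2}, ⟪g p.1, emb c.1⟫)) ∂D) ^ 2 /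
          ∫ p : X × Y,
            (⟪g p.1, emb p.2⟫ - (⨆ c : {c : Y // c ≠ p.2}, ⟪g p.1, emb c.1⟫)) ^ 2 ∂D := by
  have herr : {p : X × Y | ¬ ∀ c : Y, c ≠ p.2 → ‖emb p.2 - g p.1‖ ^ 2 < ‖emb c - g p.1‖ ^ 2} ⊆
      {p | margin emb (g p.1) p.2 ≤ 0} := by
    rintro ⟨x, y⟩ hp
    obtain ⟨c, hc, hle⟩ : ∃ c, c ≠ y ∧ ‖emb c - g x‖ ^ 2 ≤ ‖emb y - g x‖ ^ 2 := by
      simpa using hp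
    exact margin_nonpos_of_norm_sub_sq_le ((hnorm y).trans (hnorm c).symm) hc hle
  exact (measureReal_mono herr).trans
    (measureReal_nonpos_le_one_sub_sq_integral_div hM hpos.le)

/-- General C-bound for structured output majority votes. -/
theorem general_c_bound {X E Y : Type*} [MeasurableSpace X]
    [NormedAddCommGroup E] [InnerProductSpace ℝ E]
    [Fintype Y] [MeasurableSpace Y]
    (hcard : 1 < Fintype.card Y)
    (emb : Y → E) (hnorm : ∀ c : Y, ‖emb c‖ = 1)
    (g : X → E) (hg : ∀ x, g x ∈ convexHull ℝ (Set.range emb))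
    (D : Measure (X × Y)) [IsProbabilityMeasure D]
    (hM : MemLp (fun p : X × Y =>
        ⟪g p.1, emb p.2⟫ - (⨆ c : {c : Y // c ≠ p.2}, ⟪g p.1, emb c.1⟫)) 2 D)
    (hpos : 0 < ∫ p : X × Y,
        (⟪g p.1, emb p.2⟫ - (⨆ c : {c : Y // c ≠ p.2}, ⟪g p.1, emb c.1⟫)) ∂D) :
    (D {p : X × Y |
        ¬ ∀ c : Y, c ≠ p.2 → ‖emb p.2 - g p.1‖ ^ 2 < ‖emb c - g p.1‖ ^ 2}).toReal ≤
      1 - (∫ p : X × Y,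
            (⟪g p.1, emb p.2⟫ - (⨆ c : {c : Y // c ≠ p.2}, ⟪g p.1, emb c.1⟫)) ∂D) ^ 2 /
          ∫ p : X × Y,
            (⟪g p.1, emb p.2⟫ - (⨆ c : {c : Y // c ≠ p.2}, ⟪g p.1, emb c.1⟫)) ^ 2 ∂D :=
  general_c_bound_general emb hnorm g D hM hpos
end

section
/- (Multilabel ω-margin C-bound) In the multilabel setting with ω = (Q−1)/Q, define M_{ρ,ω}(x,y) = ⟨E_{h∼ρ}h(x), Y(y)⟩ − (Q−1)/Q. If E_{(x,y)∼D}[M_{ρ,ω}(x,y)] > 0, then R_D(B_ρ) ≤ 1 − (E_{(x,y)∼D}[M_{ρ,ω}(x,y)])² / E_{(x,y)∼D}[(M_{ρ,ω}(x,y))²]. -/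
open MeasureTheory ProbabilityTheory Finset

/-! If the label `y` is a vertex of the cube `[-1/√Q, 1/√Q]^Q` and the vote `w` lies in the cube,
each product `w j * y j` is at most `1/Q`; so a margin `⟨w, y⟩ > (Q-1)/Q` forces every one of them
to be positive, i.e. `w` has the sign pattern of `y`, and then `y` strictly beats every other
vertex. The majority vote therefore errs only where the margin `M` is `≤ 0`, and the one-sided
Chebyshev (Cantelli) bound `P(M ≤ 0) ≤ 1 - E[M]²/E[M²]` comes from integrating
`2cM ≤ M² + c²·1{M > 0}` with `c = E[M²]/E[M]`. -/

def hypercubeVertices (ι : Type*) (s : ℝ) : Set (ι → ℝ) := {v | ∀ j, v j = s ∨ v j = -s}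

section Hypercube

variable {ι : Type*} {s : ℝ} {w y c : ι → ℝ}

lemma abs_apply_le_of_mem_convexHull_hypercubeVertices
    (hw : w ∈ convexHull ℝ (hypercubeVertices ι s)) (j : ι) : |w j| ≤ |s| := by
  have hsub : hypercubeVertices ι s ⊆ Set.univ.pi fun _ => Set.Icc (-|s|) |s| := by
    intro v hv k _
    rcases hv k with h | h <;> rw [h] <;> constructor <;> linarith [le_abs_self s, neg_abs_le s]
  have hbox := convexHull_min hsub (convex_pi fun _ _ => convex_Icc _ _) hw j (Set.mem_univ j)
  exact abs_le.mpr hbox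

lemma apply_eq_or_eq_neg_of_mem_hypercubeVertices (hc : c ∈ hypercubeVertices ι s)
    (hy : y ∈ hypercubeVertices ι s) (j : ι) : c j = y j ∨ c j = -y j := by
  rcases hc j with hc | hc <;> rcases hy j with hy | hy <;> simp [hc, hy]

lemma mul_apply_pos_of_margin [Fintype ι] (hw : ∀ j, |w j| ≤ |s|)
    (hy : y ∈ hypercubeVertices ι s)
    (hmargin : ((Fintype.card ι : ℝ) - 1) * s ^ 2 < ∑ j, w j * y j) (j : ι) :
    0 < w j * y j := by
  have hle : ∀ k, w k * y k ≤ s ^ 2 := fun k => by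
    have hyk : |y k| = |s| := by rcases hy k with h | h <;> simp [h]
    calc w k * y k ≤ |w k| * |y k| := by rw [← abs_mul]; exact le_abs_self _
      _ ≤ |s| * |s| := by rw [hyk]; exact mul_le_mul_of_nonneg_right (hw k) (abs_nonneg s)
      _ = s ^ 2 := by rw [← abs_mul, abs_mul_self, sq]
  have hsingle : s ^ 2 - w j * y j ≤ ∑ k, (s ^ 2 - w k * y k) :=
    single_le_sum (f := fun k => s ^ 2 - w k * y k) (fun k _ => sub_nonneg.mpr (hle k))
      (mem_univ j)
  rw [sum_sub_distrib, sum_const, card_univ, nsmul_eq_mul] at hsingle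
  linarith

lemma sum_mul_lt_sum_mul_of_mul_apply_pos [Fintype ι] (hc : c ∈ hypercubeVertices ι s)
    (hy : y ∈ hypercubeVertices ι s) (hcy : c ≠ y) (hpos : ∀ j, 0 < w j * y j) :
    ∑ j, w j * c j < ∑ j, w j * y j := by
  have hle : ∀ j, w j * c j ≤ w j * y j := fun j => by
    rcases apply_eq_or_eq_neg_of_mem_hypercubeVertices hc hy j with h | h
    · rw [h]
    · rw [h]; linarith [hpos j]
  obtain ⟨j, hj⟩ := Function.ne_iff.mp hcy
  have hlt : w j * c j < w j * y j := by
    rcases apply_eq_or_eq_neg_of_mem_hypercubeVertices hc hy j with h | h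
    · exact absurd h hj
    · rw [h]; linarith [hpos j]
  exact sum_lt_sum (fun j _ => hle j) ⟨j, mem_univ j, hlt⟩

theorem sum_mul_lt_sum_mul_of_margin [Fintype ι] (hw : w ∈ convexHull ℝ (hypercubeVertices ι s))
    (hy : y ∈ hypercubeVertices ι s) (hc : c ∈ hypercubeVertices ι s) (hcy : c ≠ y)
    (hmargin : ((Fintype.card ι : ℝ) - 1) * s ^ 2 < ∑ j, w j * y j) :
    ∑ j, w j * c j < ∑ j, w j * y j :=
  sum_mul_lt_sum_mul_of_mul_apply_pos hc hy hcy <|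
    mul_apply_pos_of_margin (abs_apply_le_of_mem_convexHull_hypercubeVertices hw) hy hmargin

end Hypercube

section Cantelli

variable {Ω : Type*} [MeasurableSpace Ω] {μ : Measure Ω} {M : Ω → ℝ}

lemma two_mul_mul_le_sq_add_ite {c : ℝ} (hc : 0 ≤ c) (m : ℝ) :
    2 * c * m ≤ m ^ 2 + if 0 < m then c ^ 2 else 0 := by
  split_ifs with hm
  · nlinarith [sq_nonneg (m - c)]
  · nlinarith [sq_nonneg m]

lemma two_mul_mul_integral_le [IsFiniteMeasure μ] (hM : MemLp M 2 μ) {c : ℝ} (hc : 0 ≤ c) :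
    2 * c * ∫ x, M x ∂μ ≤ ∫ x, M x ^ 2 ∂μ + c ^ 2 * μ.real {x | 0 < M x} := by
  have hpos : NullMeasurableSet {x | 0 < M x} μ :=
    nullMeasurableSet_lt aemeasurable_const hM.aemeasurable
  have hind :
      ∫ x, {x | 0 < M x}.indicator (fun _ => c ^ 2) x ∂μ = c ^ 2 * μ.real {x | 0 < M x} := by
    rw [integral_indicator₀ hpos, setIntegral_const, smul_eq_mul, mul_comm]
  rw [← hind, ← integral_add hM.integrable_sq ((integrable_const _).indicator₀ hpos),
    ← integral_const_mul]
  refine integral_mono ((hM.integrable one_le_two).const_mul _)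
    (hM.integrable_sq.add ((integrable_const _).indicator₀ hpos)) fun x => ?_
  simpa [Set.indicator_apply, mul_assoc] using two_mul_mul_le_sq_add_ite hc (M x)

lemma sq_integral_le_integral_sq [IsProbabilityMeasure μ] (hM : MemLp M 2 μ) :
    (∫ x, M x ∂μ) ^ 2 ≤ ∫ x, M x ^ 2 ∂μ := by
  have := variance_nonneg M μ
  rw [variance_eq_sub hM] at this
  simpa [sub_nonneg] using this

lemma sq_integral_le_integral_sq_mul_measureReal_pos [IsProbabilityMeasure μ]
    (hM : MemLp M 2 μ) (hI : 0 < ∫ x, M x ∂μ) :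
    (∫ x, M x ∂μ) ^ 2 ≤ (∫ x, M x ^ 2 ∂μ) * μ.real {x | 0 < M x} := by
  set I := ∫ x, M x ∂μ
  set S := ∫ x, M x ^ 2 ∂μ
  have hS : 0 < S := (sq_pos_of_pos hI).trans_le (sq_integral_le_integral_sq hM)
  have h : 2 * (S / I) * I ≤ S + (S / I) ^ 2 * μ.real {x | 0 < M x} :=
    two_mul_mul_integral_le hM (div_nonneg hS.le hI.le)
  field_simp at h
  nlinarith

theorem measureReal_nonpos_le_one_sub_sq_integral_div_s16 [IsProbabilityMeasure μ]
    (hM : MemLp M 2 μ) (hI : 0 < ∫ x, M x ∂μ) :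
    μ.real {x | M x ≤ 0} ≤ 1 - (∫ x, M x ∂μ) ^ 2 / ∫ x, M x ^ 2 ∂μ := by
  have hcompl : {x | M x ≤ 0} = {x | 0 < M x}ᶜ := by ext; simp
  rw [hcompl, probReal_compl_eq_one_sub₀ (nullMeasurableSet_lt aemeasurable_const hM.aemeasurable),
    sub_le_sub_iff_left, div_le_iff₀ ((sq_pos_of_pos hI).trans_le (sq_integral_le_integral_sq hM)),
    mul_comm]
  exact sq_integral_le_integral_sq_mul_measureReal_pos hM hI

end Cantelli

theorem multilabel_c_bound_general {X : Type*} [MeasurableSpace X] {Q : ℕ}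
    (V : Set (Fin Q → ℝ))
    (hV : V = {v | ∀ j, v j = 1 / Real.sqrt Q ∨ v j = -(1 / Real.sqrt Q)})
    (g : X → Fin Q → ℝ) (hg : ∀ x, g x ∈ convexHull ℝ V)
    (D : Measure (X × (Fin Q → ℝ))) [IsProbabilityMeasure D]
    (hlab : ∀ᵐ p ∂D, p.2 ∈ V)
    (hM : MemLp (fun p : X × (Fin Q → ℝ) =>
        (∑ j, g p.1 j * p.2 j) - ((Q : ℝ) - 1) / Q) 2 D)
    (hpos : 0 < ∫ p : X × (Fin Q → ℝ),
        ((∑ j, g p.1 j * p.2 j) - ((Q : ℝ) - 1) / Q) ∂D) :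
    (D {p : X × (Fin Q → ℝ) |
        ¬ ∀ c ∈ V, c ≠ p.2 → (∑ j, g p.1 j * c j) < ∑ j, g p.1 j * p.2 j}).toReal ≤
      1 - (∫ p : X × (Fin Q → ℝ),
              ((∑ j, g p.1 j * p.2 j) - ((Q : ℝ) - 1) / Q) ∂D) ^ 2 /
          ∫ p : X × (Fin Q → ℝ),
              ((∑ j, g p.1 j * p.2 j) - ((Q : ℝ) - 1) / Q) ^ 2 ∂D := by
  subst hV
  have hω : ((Q : ℝ) - 1) / Q = ((Fintype.card (Fin Q) : ℝ) - 1) * (1 / Real.sqrt Q) ^ 2 := by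
    rw [Fintype.card_fin, div_pow, one_pow, Real.sq_sqrt (Nat.cast_nonneg Q), mul_one_div]
  refine le_trans (ENNReal.toReal_mono (measure_ne_top _ _) (measure_mono_ae ?_))
    (measureReal_nonpos_le_one_sub_sq_integral_div_s16 hM hpos)
  filter_upwards [hlab] with p hp hwrong
  by_contra hmargin
  refine hwrong fun c hc hcy => sum_mul_lt_sum_mul_of_margin (hg p.1) hp hc hcy ?_
  rw [← hω]
  exact sub_pos.mp (not_le.mp hmargin)

/-- Multilabel ω-margin C-bound with ω = (Q−1)/Q. -/
theorem multilabel_c_bound {X : Type*} [MeasurableSpace X] {Q : ℕ} (hQ : 2 ≤ Q)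
    (V : Set (Fin Q → ℝ))
    (hV : V = {v | ∀ j, v j = 1 / Real.sqrt Q ∨ v j = -(1 / Real.sqrt Q)})
    (g : X → Fin Q → ℝ) (hg : ∀ x, g x ∈ convexHull ℝ V)
    (D : Measure (X × (Fin Q → ℝ))) [IsProbabilityMeasure D]
    (hlab : ∀ᵐ p ∂D, p.2 ∈ V)
    (hM : MemLp (fun p : X × (Fin Q → ℝ) =>
        (∑ j, g p.1 j * p.2 j) - ((Q : ℝ) - 1) / Q) 2 D)
    (hpos : 0 < ∫ p : X × (Fin Q → ℝ),
        ((∑ j, g p.1 j * p.2 j) - ((Q : ℝ) - 1) / Q) ∂D) :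
    (D {p : X × (Fin Q → ℝ) |
        ¬ ∀ c ∈ V, c ≠ p.2 → (∑ j, g p.1 j * c j) < ∑ j, g p.1 j * p.2 j}).toReal ≤
      1 - (∫ p : X × (Fin Q → ℝ),
              ((∑ j, g p.1 j * p.2 j) - ((Q : ℝ) - 1) / Q) ∂D) ^ 2 /
          ∫ p : X × (Fin Q → ℝ),
              ((∑ j, g p.1 j * p.2 j) - ((Q : ℝ) - 1) / Q) ^ 2 ∂D :=
  multilabel_c_bound_general V hV g hg D hlab hM hpos
end
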